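/- For a domain D ⊆ ℂ, the closure of S_n(D) equals π_n((closure D)^n), and the topological boundary of S_n(D) equals π_n(∂D × (closure D)^{n-1}). -/

import Mathlib

/-- The symmetrization map `π_n : ℂ^n → ℂ^n`, whose `j`-th coordinate is the
`(j+1)`-st elementary symmetric polynomial of the entries. -/
noncomputable def symPoly (n : ℕ) (lam : Fin n → ℂ) : Fin n → ℂ :=
  fun j => ∑ t ∈ Finset.powersetCard ((j : ℕ) + 1) Finset.univ, ∏ i ∈ t, lam i

/-- The `n`-fold symmetric product `S_n(D) = π_n(D^n)` of a planar set `D`. -/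
noncomputable def symProd (n : ℕ) (D : Set ℂ) : Set (Fin n → ℂ) :=
  symPoly n '' {lam | ∀ i, lam i ∈ D}

/-!
The symmetrization map `π_n` sends `λ` to the signed coefficients of `∏ (X - λᵢ)`. It is continuous,
surjective (every monic polynomial over `ℂ` splits) and proper (Cauchy's bound controls the roots by
the coefficients), hence a closed map, so it commutes with taking closures. Its fibres consist of
reorderings of one tuple, since a polynomial determines its multiset of roots; thus the complement
of `S_n(D)` is the image of the closed set of tuples with an entry outside `D`, and `S_n(D)` is open.
The frontier is therefore `π_n((closure D)^n) \ S_n(D)`: tuples in `(closure D)^n` with some entry in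
`closure D \ D = ∂D`, which a permutation moves to the first slot.
-/

open Polynomial

lemma symPoly_apply_eq_esymm (n : ℕ) (lam : Fin n → ℂ) (j : Fin n) :
    symPoly n lam j = (Finset.univ.val.map lam).esymm ((j : ℕ) + 1) := by
  rw [symPoly, Finset.esymm_map_val]

noncomputable def vietaPoly (n : ℕ) (z : Fin n → ℂ) : ℂ[X] :=
  X ^ n + ∑ j : Fin n, C ((-1) ^ ((j : ℕ) + 1) * z j) * X ^ (n - ((j : ℕ) + 1))

lemma prod_X_sub_C_eq_vietaPoly (n : ℕ) (lam : Fin n → ℂ) :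
    ((Finset.univ.val.map lam).map fun t => X - C t).prod = vietaPoly n (symPoly n lam) := by
  rw [Multiset.prod_X_sub_X_eq_sum_esymm, Multiset.card_map, Finset.card_val, Finset.card_univ,
    Fintype.card_fin, Finset.sum_range_succ', Finset.sum_range, vietaPoly, add_comm]
  simp only [Multiset.esymm, Multiset.powersetCard_zero_left, Multiset.map_singleton,
    Multiset.prod_zero, Multiset.sum_singleton, symPoly_apply_eq_esymm, pow_zero, map_one, one_mul,
    map_mul, map_pow, map_neg, Nat.sub_zero, mul_assoc]

lemma roots_vietaPoly_symPoly (n : ℕ) (lam : Fin n → ℂ) :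
    (vietaPoly n (symPoly n lam)).roots = Finset.univ.val.map lam := by
  rw [← prod_X_sub_C_eq_vietaPoly, roots_multiset_prod_X_sub_C]

lemma coeff_vietaPoly (n : ℕ) (z : Fin n → ℂ) (j : Fin n) :
    (vietaPoly n z).coeff (n - ((j : ℕ) + 1)) = (-1) ^ ((j : ℕ) + 1) * z j := by
  rw [vietaPoly, coeff_add, coeff_X_pow, if_neg (by omega), zero_add, finsetSum_coeff,
    Finset.sum_eq_single j]
  · rw [coeff_C_mul_X_pow, if_pos rfl]
  · intro i _ hij
    rw [coeff_C_mul_X_pow, if_neg fun h => hij (Fin.ext (by omega))]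
  · exact fun h => absurd (Finset.mem_univ j) h

lemma vietaPoly_injective (n : ℕ) : Function.Injective (vietaPoly n) := by
  intro z w h
  funext j
  have hj := coeff_vietaPoly n z j
  rw [h, coeff_vietaPoly] at hj
  exact (mul_left_cancel₀ (pow_ne_zero _ (neg_ne_zero.mpr one_ne_zero)) hj).symm

lemma degree_vietaPoly_sub_X_pow_lt (n : ℕ) (z : Fin n → ℂ) :
    (vietaPoly n z - X ^ n).degree < (n : WithBot ℕ) := by
  rw [vietaPoly, add_sub_cancel_left]
  refine (degree_sum_le _ _).trans_lt ((Finset.sup_lt_iff (WithBot.bot_lt_coe n)).mpr ?_)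
  intro j _
  exact (degree_C_mul_X_pow_le _ _).trans_lt (Nat.cast_lt.mpr (by have := j.isLt; omega))

lemma monic_vietaPoly (n : ℕ) (z : Fin n → ℂ) : (vietaPoly n z).Monic := by
  simpa using monic_X_pow_add (degree_vietaPoly_sub_X_pow_lt n z)

lemma natDegree_vietaPoly (n : ℕ) (z : Fin n → ℂ) : (vietaPoly n z).natDegree = n := by
  rw [← add_sub_cancel (X ^ n) (vietaPoly n z), natDegree_add_eq_left_of_degree_lt, natDegree_X_pow]
  simpa using degree_vietaPoly_sub_X_pow_lt n z

lemma nnnorm_coeff_vietaPoly_le (n : ℕ) (z : Fin n → ℂ) {k : ℕ} (hk : k < n) :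
    ‖(vietaPoly n z).coeff k‖₊ ≤ ‖z‖₊ := by
  obtain ⟨j, rfl⟩ : ∃ j : Fin n, n - ((j : ℕ) + 1) = k := ⟨⟨n - 1 - k, by omega⟩, by simp; omega⟩
  rw [coeff_vietaPoly, nnnorm_mul, nnnorm_pow, nnnorm_neg, nnnorm_one, one_pow, one_mul]
  exact nnnorm_le_pi_nnnorm z j

lemma norm_le_of_isRoot_vietaPoly (n : ℕ) (z : Fin n → ℂ) {x : ℂ}
    (hx : (vietaPoly n z).IsRoot x) : ‖x‖ ≤ ‖z‖ + 1 := by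
  have hbound : cauchyBound (vietaPoly n z) ≤ ‖z‖₊ + 1 := by
    rw [cauchyBound, (monic_vietaPoly n z).leadingCoeff, nnnorm_one, div_one, natDegree_vietaPoly]
    gcongr
    exact Finset.sup_le fun k hk => nnnorm_coeff_vietaPoly_le n z (Finset.mem_range.mp hk)
  exact_mod_cast ((hx.norm_lt_cauchyBound (monic_vietaPoly n z).ne_zero).trans_le hbound).le

lemma Multiset.exists_univ_val_map_eq {α : Type*} (s : Multiset α) {n : ℕ}
    (hs : Multiset.card s = n) : ∃ f : Fin n → α, Finset.univ.val.map f = s := by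
  obtain ⟨l, rfl⟩ := Quot.exists_rep s
  obtain rfl : l.length = n := hs
  exact ⟨l.get, by simp⟩

lemma symPoly_surjective (n : ℕ) : Function.Surjective (symPoly n) := by
  intro z
  have hsplit : Multiset.card (vietaPoly n z).roots = n := by
    conv_rhs => rw [← natDegree_vietaPoly n z]
    exact splits_iff_card_roots.mp (IsAlgClosed.splits _)
  obtain ⟨lam, hlam⟩ := (vietaPoly n z).roots.exists_univ_val_map_eq hsplit
  refine ⟨lam, vietaPoly_injective n ?_⟩
  rw [← prod_X_sub_C_eq_vietaPoly, hlam, prod_multiset_X_sub_C_of_monic_of_roots_card_eq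
    (monic_vietaPoly n z) (by rw [hsplit, natDegree_vietaPoly])]

lemma exists_apply_eq_of_symPoly_eq {n : ℕ} {lam mu : Fin n → ℂ}
    (h : symPoly n lam = symPoly n mu) (i : Fin n) : ∃ i', mu i' = lam i := by
  have hmem : lam i ∈ Finset.univ.val.map mu := by
    rw [← roots_vietaPoly_symPoly, ← h, roots_vietaPoly_symPoly]
    exact Multiset.mem_map_of_mem _ (Finset.mem_univ i)
  simpa using hmem

lemma symPoly_comp_perm (n : ℕ) (lam : Fin n → ℂ) (σ : Equiv.Perm (Fin n)) :
    symPoly n (lam ∘ σ) = symPoly n lam := by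
  funext j
  rw [symPoly_apply_eq_esymm, symPoly_apply_eq_esymm, ← Multiset.map_map,
    Multiset.map_univ_val_equiv]

lemma norm_le_norm_symPoly_add_one (n : ℕ) (lam : Fin n → ℂ) :
    ‖lam‖ ≤ ‖symPoly n lam‖ + 1 := by
  refine (pi_norm_le_iff_of_nonneg (by positivity)).mpr fun i => ?_
  refine norm_le_of_isRoot_vietaPoly n _ (isRoot_of_mem_roots ?_)
  rw [roots_vietaPoly_symPoly]
  exact Multiset.mem_map_of_mem _ (Finset.mem_univ i)

lemma continuous_symPoly (n : ℕ) : Continuous (symPoly n) :=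
  continuous_pi fun _ => continuous_finsetSum _ fun _ _ =>
    continuous_finsetProd _ fun i _ => continuous_apply i

lemma isProperMap_symPoly (n : ℕ) : IsProperMap (symPoly n) := by
  refine isProperMap_iff_isCompact_preimage.mpr ⟨continuous_symPoly n, fun K hK => ?_⟩
  refine Metric.isCompact_of_isClosed_isBounded (hK.isClosed.preimage (continuous_symPoly n)) ?_
  obtain ⟨R, hR⟩ := isBounded_iff_forall_norm_le.mp hK.isBounded
  exact isBounded_iff_forall_norm_le.mpr
    ⟨R + 1, fun lam hlam => (norm_le_norm_symPoly_add_one n lam).trans (by gcongr; exact hR _ hlam)⟩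

lemma closure_symProd (n : ℕ) (D : Set ℂ) :
    closure (symProd n D) = symPoly n '' {lam | ∀ i, lam i ∈ closure D} := by
  have hpi (s : Set ℂ) : {lam : Fin n → ℂ | ∀ i, lam i ∈ s} = Set.univ.pi fun _ => s := by
    ext; simp
  rw [symProd, (isProperMap_symPoly n).isClosedMap.closure_image_eq_of_continuous
    (continuous_symPoly n), hpi, hpi, closure_pi_set]

lemma compl_symProd (n : ℕ) (D : Set ℂ) :
    (symProd n D)ᶜ = symPoly n '' {lam | ∃ i, lam i ∉ D} := by
  ext z
  obtain ⟨lam, rfl⟩ := symPoly_surjective n z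
  constructor
  · exact fun hz => ⟨lam, not_forall.mp fun h => hz ⟨lam, h, rfl⟩, rfl⟩
  · rintro ⟨mu, ⟨i, hi⟩, hmu⟩ ⟨nu, hnu, hnueq⟩
    obtain ⟨i', hi'⟩ := exists_apply_eq_of_symPoly_eq (hmu.trans hnueq.symm) i
    exact hi (hi' ▸ hnu i')

lemma isOpen_symProd (n : ℕ) {D : Set ℂ} (hD : IsOpen D) : IsOpen (symProd n D) := by
  rw [← isClosed_compl_iff, compl_symProd]
  refine (isProperMap_symPoly n).isClosedMap _ ?_
  have hunion : {lam : Fin n → ℂ | ∃ i, lam i ∉ D} = ⋃ i, (fun lam => lam i) ⁻¹' Dᶜ := by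
    ext; simp
  rw [hunion]
  exact isClosed_iUnion_of_finite fun i => hD.isClosed_compl.preimage (continuous_apply i)

lemma image_closure_diff_symProd (n : ℕ) (D : Set ℂ) (i₀ : Fin n) :
    symPoly n '' {lam | ∀ i, lam i ∈ closure D} \ symProd n D =
      symPoly n '' {lam | lam i₀ ∈ closure D \ D ∧ ∀ i, i ≠ i₀ → lam i ∈ closure D} := by
  apply Set.Subset.antisymm
  · rintro _ ⟨⟨lam, hlam, rfl⟩, hnot⟩
    obtain ⟨i₁, hi₁⟩ := not_forall.mp fun h => hnot ⟨lam, h, rfl⟩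
    refine ⟨lam ∘ Equiv.swap i₀ i₁, ⟨?_, fun i _ => hlam _⟩, symPoly_comp_perm n lam _⟩
    simpa using And.intro (hlam i₁) hi₁
  · rintro _ ⟨lam, ⟨hi₀, hrest⟩, rfl⟩
    refine ⟨⟨lam, fun i => ?_, rfl⟩, fun ⟨mu, hmu, hmueq⟩ => ?_⟩
    · rcases eq_or_ne i i₀ with rfl | hi
      exacts [hi₀.1, hrest i hi]
    · obtain ⟨i', hi'⟩ := exists_apply_eq_of_symPoly_eq hmueq.symm i₀
      exact hi₀.2 (hi' ▸ hmu i')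

theorem closure_frontier_symProd_general (n : ℕ) (hn : 0 < n) (D : Set ℂ)
    (hDopen : IsOpen D) :
    closure (symProd n D) = symPoly n '' {lam | ∀ i, lam i ∈ closure D} ∧
    frontier (symProd n D) =
      symPoly n '' {lam | lam ⟨0, hn⟩ ∈ frontier D ∧
        ∀ i : Fin n, i ≠ ⟨0, hn⟩ → lam i ∈ closure D} := by
  refine ⟨closure_symProd n D, ?_⟩
  rw [frontier, (isOpen_symProd n hDopen).interior_eq, closure_symProd, hDopen.frontier_eq,
    image_closure_diff_symProd]

/-- For a domain `D ⊆ ℂ`: `closure (S_n(D)) = π_n((closure D)^n)` and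
`frontier (S_n(D)) = π_n(∂D × (closure D)^{n-1})`. -/
theorem closure_frontier_symProd (n : ℕ) (hn : 0 < n) (D : Set ℂ)
    (hDopen : IsOpen D) (hDconn : IsConnected D) :
    closure (symProd n D) = symPoly n '' {lam | ∀ i, lam i ∈ closure D} ∧
    frontier (symProd n D) =
      symPoly n '' {lam | lam ⟨0, hn⟩ ∈ frontier D ∧
        ∀ i : Fin n, i ≠ ⟨0, hn⟩ → lam i ∈ closure D} :=
  closure_frontier_symProd_general n hn D hDopen
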